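/- Let X ∈ St(n,p), let 𝔠 = {C_1,…,C_ℓ} be a partition of [p] with ℓ ≥ 2, and let v, η ∈ ℝ^{n×p}. For each unordered pair {i,j} write G_{ij} = Π_{ij}^X(v·I_{C_{ij}}) (the partial Riemannian subgradient direction associated with v). Then: (i) (1/C(ℓ,2)) Σ_{{i,j}} ⟨B_X(G_{ij}(I_{C_{ij}})ᵀ), η⟩ = ⟨P_{T_X}(v), η⟩; and (ii) (1/C(ℓ,2)) Σ_{{i,j}} ⟨B_X(G_{ij}(I_{C_{ij}})ᵀ), G_{ij}(I_{C_{ij}})ᵀ⟩ = ‖P_{T_X}(v)‖². That is, the expectation over a uniformly random pair {i,j} of the lifted partial Riemannian subgradient, measured in the A_X^{-1}-inner product, equals the full Riemannian subgradient P_{T_X}(v) in the Frobenius inner product, and similarly for squared norms. -/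

import Mathlib

/-!
Common definitions for the formalization of results from
"Nonsmooth Optimization over the Stiefel Manifold via a Randomized
Submanifold Subgradient Method" (RSSM).
-/

open Matrix Finset

noncomputable section

namespace RSSM

variable {n p ℓ : ℕ}

/-- Real `n × p` matrices. -/
abbrev Mat (n p : ℕ) := Matrix (Fin n) (Fin p) ℝ

/-- Frobenius inner product `⟨ξ,η⟩ = tr(ξᵀ η)`. -/
def fip (ξ η : Mat n p) : ℝ := (ξᵀ * η).trace

/-- Frobenius norm. -/
def fnorm (ξ : Mat n p) : ℝ := Real.sqrt (fip ξ ξ)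

/-- The Stiefel manifold `St(n,p)`. -/
def Stiefel (n p : ℕ) : Set (Mat n p) := {X | Xᵀ * X = 1}

/-- Column-selection matrix `I_C`. -/
def sel (C : Finset (Fin p)) : Matrix (Fin p) (Fin C.card) ℝ :=
  Matrix.of fun s t => if s = C.orderEmbOfFin rfl t then (1 : ℝ) else 0

/-- Skew-symmetric part. -/
def skewPart {m : ℕ} (A : Matrix (Fin m) (Fin m) ℝ) : Matrix (Fin m) (Fin m) ℝ :=
  (1 / 2 : ℝ) • (A - Aᵀ)

/-- Symmetric part. -/
def symPart {m : ℕ} (A : Matrix (Fin m) (Fin m) ℝ) : Matrix (Fin m) (Fin m) ℝ :=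
  (1 / 2 : ℝ) • (A + Aᵀ)

open Classical in
/-- Inverse of the positive-semidefinite square root (junk value `0` otherwise). -/
def invSqrt {m : ℕ} (S : Matrix (Fin m) (Fin m) ℝ) : Matrix (Fin m) (Fin m) ℝ :=
  if h : S.PosSemidef then
    ((h.1.eigenvectorUnitary : Matrix (Fin m) (Fin m) ℝ)
      * diagonal ((RCLike.ofReal : ℝ → ℝ) ∘ (√·) ∘ h.1.eigenvalues)
      * (star h.1.eigenvectorUnitary : Matrix (Fin m) (Fin m) ℝ))⁻¹ else 0

/-- Orthogonal projection onto the tangent space `T_X St(n,p)`. -/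
def ptan (X ξ : Mat n p) : Mat n p := ξ - X * symPart (Xᵀ * ξ)

/-- Orthogonal projection `Π` onto the tangent space of the submanifold block at `X_D`. -/
def pblk (X : Mat n p) (D : Finset (Fin p)) (η : Matrix (Fin n) (Fin D.card) ℝ) :
    Matrix (Fin n) (Fin D.card) ℝ :=
  (X * sel D) * skewPart ((X * sel D)ᵀ * η) + (1 - X * Xᵀ) * η

/-- The averaging operator `A_X` (written as an average over ordered pairs of
distinct indices, which equals the average over unordered pairs since each
unordered pair is counted twice). -/
def avg (C : Fin ℓ → Finset (Fin p)) (X ξ : Mat n p) : Mat n p :=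
  ((ℓ : ℝ) * ((ℓ : ℝ) - 1))⁻¹ •
    ∑ q ∈ Finset.univ.offDiag,
      ((1 : Matrix (Fin n) (Fin n) ℝ)
          - (X * sel ((C q.1 ∪ C q.2)ᶜ)) * (X * sel ((C q.1 ∪ C q.2)ᶜ))ᵀ)
        * (ξ * sel (C q.1 ∪ C q.2)) * (sel (C q.1 ∪ C q.2))ᵀ

/-- The averaging operator `A_X` as a linear endomorphism. -/
def avgL (C : Fin ℓ → Finset (Fin p)) (X : Mat n p) : Mat n p →ₗ[ℝ] Mat n p where
  toFun := avg C X
  map_add' := by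
    intro ξ η
    simp [avg, Matrix.add_mul, Matrix.mul_add, Finset.sum_add_distrib, smul_add]
  map_smul' := by
    intro c ξ
    simp only [avg, RingHom.id_apply, Matrix.smul_mul, Matrix.mul_smul, ← Finset.smul_sum]
    rw [smul_comm]

/-- `C(ℓ,2) = ℓ(ℓ-1)/2`. -/
def choose2 (ℓ : ℕ) : ℝ := (ℓ : ℝ) * ((ℓ : ℝ) - 1) / 2

/-- Block Hadamard product `A ⊡ M` with respect to the partition `C`. -/
def bhad (C : Fin ℓ → Finset (Fin p)) (A : Matrix (Fin ℓ) (Fin ℓ) ℝ)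
    (M : Matrix (Fin p) (Fin p) ℝ) : Matrix (Fin p) (Fin p) ℝ :=
  Matrix.of fun s t => (∑ i, ∑ j, if s ∈ C i ∧ t ∈ C j then A i j else 0) * M s t

/-- `Q' = J - ((ℓ-2)/(ℓ-1)) I`. -/
def Qmat (ℓ : ℕ) : Matrix (Fin ℓ) (Fin ℓ) ℝ :=
  Matrix.of fun i j => 1 - (if i = j then ((ℓ : ℝ) - 2) / ((ℓ : ℝ) - 1) else 0)

/-- The all-ones `ℓ × ℓ` matrix `J`. -/
def Jmat (ℓ : ℕ) : Matrix (Fin ℓ) (Fin ℓ) ℝ := Matrix.of fun _ _ => 1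

/-- The operator `B_Z` (the inverse of the averaging operator `A_Z`). -/
def Bop (C : Fin ℓ → Finset (Fin p)) (Z ξ : Mat n p) : Mat n p :=
  Z * (choose2 ℓ • bhad C (Qmat ℓ) (Zᵀ * ξ)) + ((ℓ : ℝ) / 2) • ((1 - Z * Zᵀ) * ξ)

/-- `‖ξ‖²_{A_Z^{-1}} = ⟨B_Z(ξ), ξ⟩`. -/
def anorm2 (C : Fin ℓ → Finset (Fin p)) (Z ξ : Mat n p) : ℝ := fip (Bop C Z ξ) ξ

/-- The RSSM update `U(X, v, γ, {i,j})`: it agrees with `X` on all columns outside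
`C_i ∪ C_j` and performs a retracted partial Riemannian subgradient step there. -/
def update (C : Fin ℓ → Finset (Fin p)) (X v : Mat n p) (γ : ℝ) (i j : Fin ℓ) : Mat n p :=
  X - (X * sel (C i ∪ C j)) * (sel (C i ∪ C j))ᵀ
    + ((X * sel (C i ∪ C j) - γ • pblk X (C i ∪ C j) (v * sel (C i ∪ C j)))
        * invSqrt ((X * sel (C i ∪ C j) - γ • pblk X (C i ∪ C j) (v * sel (C i ∪ C j)))ᵀ
            * (X * sel (C i ∪ C j) - γ • pblk X (C i ∪ C j) (v * sel (C i ∪ C j)))))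
      * (sel (C i ∪ C j))ᵀ

/-- The subdifferential of a `τ`-weakly convex function relative to `Ω`. -/
def subdiff (Ω : Set (Mat n p)) (τ : ℝ) (f : Mat n p → ℝ) (X : Mat n p) :
    Set (Mat n p) :=
  {v | ∀ Y ∈ Ω, f Y ≥ f X + fip v (Y - X) - τ / 2 * (fnorm (Y - X)) ^ 2}

/-- `C` is a partition of `[p]` into nonempty blocks. -/
def IsPartition (C : Fin ℓ → Finset (Fin p)) : Prop :=
  (∀ i, (C i).Nonempty) ∧ (∀ i j, i ≠ j → Disjoint (C i) (C j)) ∧ (∀ s, ∃ i, s ∈ C i)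

/-- The weakly convex Lipschitz setting. -/
structure Setting (n p : ℕ) (f : Mat n p → ℝ) (τ L : ℝ) (Ω : Set (Mat n p)) : Prop where
  tau_nonneg : 0 ≤ τ
  L_pos : 0 < L
  isOpen : IsOpen Ω
  bounded : ∃ R : ℝ, ∀ Y ∈ Ω, fnorm Y ≤ R
  convex : Convex ℝ Ω
  stiefel_subset : Stiefel n p ⊆ Ω
  lipschitz : ∀ X ∈ Ω, ∀ Y ∈ Ω, |f X - f Y| ≤ L * fnorm (X - Y)
  weaklyConvex : ConvexOn ℝ Ω (fun Z => f Z + τ / 2 * (fnorm Z) ^ 2)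

/-- The adaptive proximal objective `Y ↦ f(Y) + (1/(2λ))‖Y-X‖²_{A_X^{-1}}`. -/
def pobj (C : Fin ℓ → Finset (Fin p)) (f : Mat n p → ℝ) (lam : ℝ) (X Y : Mat n p) : ℝ :=
  f Y + 1 / (2 * lam) * anorm2 C X (Y - X)

/-- The adaptive Moreau envelope `f_λ`. -/
def moreau (C : Fin ℓ → Finset (Fin p)) (f : Mat n p → ℝ) (lam : ℝ) (X : Mat n p) : ℝ :=
  sInf ((fun Y => pobj C f lam X Y) '' Stiefel n p)

open Classical in
/-- The adaptive proximal point `Z_X` (defined via choice; under the standing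
hypotheses the minimizer over the Stiefel manifold exists and is unique). -/
def proxPt (C : Fin ℓ → Finset (Fin p)) (f : Mat n p → ℝ) (lam : ℝ) (X : Mat n p) :
    Mat n p :=
  if h : ∃ Z ∈ Stiefel n p, ∀ Y ∈ Stiefel n p, pobj C f lam X Z ≤ pobj C f lam X Y
  then h.choose else X

/-- The surrogate stationarity measure `Θ_λ(X) = (1/λ)‖Z_X - X‖_{A_X^{-1}}`. -/
def Theta (C : Fin ℓ → Finset (Fin p)) (f : Mat n p → ℝ) (lam : ℝ) (X : Mat n p) : ℝ :=
  1 / lam * Real.sqrt (anorm2 C X (proxPt C f lam X - X))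

/-- The type of unordered pairs of distinct indices in `[ℓ]`. -/
def PairT (ℓ : ℕ) := {s : Sym2 (Fin ℓ) // ¬ s.IsDiag}

instance : Fintype (PairT ℓ) := by unfold PairT; infer_instance
instance : DecidableEq (PairT ℓ) := by unfold PairT; infer_instance
instance : MeasurableSpace (PairT ℓ) := ⊤

/-- The RSSM update as a function of an unordered pair of indices. -/
def updateS (C : Fin ℓ → Finset (Fin p)) (X v : Mat n p) (γ : ℝ) (s : Sym2 (Fin ℓ)) :
    Mat n p :=
  Sym2.lift ⟨fun i j => update C X v γ i j, by
    intro i j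
    show update C X v γ i j = update C X v γ j i
    unfold update pblk
    rw [Finset.union_comm (C i) (C j)]⟩ s

/-- The RSSM iterates driven by a sequence `ω` of unordered pairs. -/
def seqIter (C : Fin ℓ → Finset (Fin p)) (V : Mat n p → Mat n p) (X0 : Mat n p)
    (γ : ℕ → ℝ) (ω : ℕ → PairT ℓ) : ℕ → Mat n p
  | 0 => X0
  | k + 1 => updateS C (seqIter C V X0 γ ω k) (V (seqIter C V X0 γ ω k)) (γ k) (ω k).1

/-- The RSSM iterate after `k` steps driven by a finite prefix of unordered pairs. -/
def preIter (C : Fin ℓ → Finset (Fin p)) (V : Mat n p → Mat n p) (X0 : Mat n p)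
    (γ : ℕ → ℝ) : (k : ℕ) → (Fin k → PairT ℓ) → Mat n p
  | 0, _ => X0
  | k + 1, g =>
      updateS C (preIter C V X0 γ k (fun m => g m.castSucc))
        (V (preIter C V X0 γ k (fun m => g m.castSucc))) (γ k) (g (Fin.last k)).1

/-- `E[h(X^k)]`, the average over all prefixes of unordered pairs of length `k`. -/
def Eavg (C : Fin ℓ → Finset (Fin p)) (V : Mat n p → Mat n p) (X0 : Mat n p)
    (γ : ℕ → ℝ) (k : ℕ) (h : Mat n p → ℝ) : ℝ :=
  (1 / (Fintype.card (PairT ℓ) : ℝ)) ^ k * ∑ g : Fin k → PairT ℓ, h (preIter C V X0 γ k g)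


/-! ### Auxiliary lemmas -/

/-- Diagonal indicator projector of a column set. -/
def Pm (D : Finset (Fin p)) : Matrix (Fin p) (Fin p) ℝ :=
  Matrix.diagonal (fun s => if s ∈ D then (1:ℝ) else 0)

lemma Pm_transpose (D : Finset (Fin p)) : (Pm D)ᵀ = Pm D := Matrix.diagonal_transpose _

lemma Pm_mul_Pm (D : Finset (Fin p)) : Pm D * Pm D = Pm D := by
  ext s t
  by_cases hst : s = t
  · subst hst
    by_cases h : s ∈ D <;> simp [Pm, Matrix.diagonal_mul_diagonal, Matrix.diagonal_apply, h]
  · simp [Pm, Matrix.diagonal_mul_diagonal, Matrix.diagonal_apply, hst]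

lemma sel_mul_selT (D : Finset (Fin p)) : sel D * (sel D)ᵀ = Pm D := by
  ext s t
  simp only [Matrix.mul_apply, sel, Matrix.transpose_apply, Matrix.of_apply, Pm,
    Matrix.diagonal_apply, ite_mul, one_mul, zero_mul]
  by_cases hst : s = t
  · subst hst
    simp only [if_pos rfl]
    by_cases hs : s ∈ D
    · have : s ∈ Set.range (D.orderEmbOfFin rfl) := by
        rw [Finset.range_orderEmbOfFin]; exact hs
      obtain ⟨u₀, hu₀⟩ := this
      rw [Finset.sum_eq_single u₀]
      · simp [hu₀, hs]
      · intro b _ hb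
        rw [if_neg]
        intro hsb
        exact hb ((D.orderEmbOfFin rfl).injective (hu₀.trans hsb).symm)
      · simp
    · rw [if_neg hs, if_pos trivial, Finset.sum_eq_zero]
      intro u _
      rw [if_neg]
      intro hsu
      exact hs (hsu ▸ Finset.orderEmbOfFin_mem D rfl u)
  · rw [if_neg hst, Finset.sum_eq_zero]
    intro u _
    split_ifs with h1 h2
    · exact absurd (h1.trans h2.symm) hst
    · rfl
    · rfl

lemma sel_mul_selT_assoc {m : Type*} [Fintype m] (D : Finset (Fin p))
    (M : Matrix (Fin p) m ℝ) : sel D * ((sel D)ᵀ * M) = Pm D * M := by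
  rw [← Matrix.mul_assoc, sel_mul_selT]

/-! #### Frobenius inner product lemmas -/

lemma fip_eq_sum (ξ η : Mat n p) : fip ξ η = ∑ j, ∑ i, ξ i j * η i j := by
  simp [fip, Matrix.trace, Matrix.mul_apply, Matrix.diag]

lemma fip_comm (ξ η : Mat n p) : fip ξ η = fip η ξ := by
  simp [fip_eq_sum, mul_comm]

lemma fip_add_left (ξ ξ' η : Mat n p) : fip (ξ + ξ') η = fip ξ η + fip ξ' η := by
  simp [fip_eq_sum, add_mul, Finset.sum_add_distrib]

lemma fip_add_right (ξ η η' : Mat n p) : fip ξ (η + η') = fip ξ η + fip ξ η' := by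
  simp [fip_eq_sum, mul_add, Finset.sum_add_distrib]

lemma fip_smul_left (c : ℝ) (ξ η : Mat n p) : fip (c • ξ) η = c * fip ξ η := by
  simp [fip_eq_sum, Finset.mul_sum, mul_assoc]

lemma fip_smul_right (c : ℝ) (ξ η : Mat n p) : fip ξ (c • η) = c * fip ξ η := by
  rw [fip_comm, fip_smul_left, fip_comm]

lemma fip_zero_right (ξ : Mat n p) : fip ξ 0 = 0 := by simp [fip]

lemma fip_self_nonneg (ξ : Mat n p) : 0 ≤ fip ξ ξ := by
  rw [fip_eq_sum]
  apply Finset.sum_nonneg; intro j _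
  apply Finset.sum_nonneg; intro i _
  exact mul_self_nonneg _

lemma fip_sum_left {α : Type*} (s : Finset α) (F : α → Mat n p) (η : Mat n p) :
    fip (∑ a ∈ s, F a) η = ∑ a ∈ s, fip (F a) η := by
  simp only [fip_eq_sum, Matrix.sum_apply, Finset.sum_mul]
  rw [show (∑ j, ∑ i, ∑ a ∈ s, F a i j * η i j)
      = ∑ j, ∑ a ∈ s, ∑ i, F a i j * η i j from
    Finset.sum_congr rfl fun j _ => Finset.sum_comm, Finset.sum_comm]

lemma fip_mul (X : Mat n p) (A : Matrix (Fin p) (Fin p) ℝ) (η : Mat n p) :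
    fip (X * A) η = fip A (Xᵀ * η) := by
  simp [fip, Matrix.transpose_mul, Matrix.mul_assoc]

lemma fip_one_mulT (W η : Mat n p) :
    fip (1 : Matrix (Fin p) (Fin p) ℝ) (Wᵀ * η) = fip W η := by
  simp [fip, Matrix.transpose_one]

lemma fip_WP (W : Mat n p) (D : Finset (Fin p)) :
    fip (W * Pm D) (W * Pm D) = fip W (W * Pm D) := by
  unfold fip
  rw [Matrix.transpose_mul, Pm_transpose, Matrix.mul_assoc, Matrix.trace_mul_comm,
    Matrix.mul_assoc, Matrix.mul_assoc, Pm_mul_Pm]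

lemma fip_bhad {C : Fin ℓ → Finset (Fin p)} (A : Matrix (Fin ℓ) (Fin ℓ) ℝ)
    (Kp : Matrix (Fin p) (Fin p) ℝ) (D : Finset (Fin p)) :
    fip (bhad C A (Pm D * Kp * Pm D)) (Pm D * Kp * Pm D)
      = fip (bhad C A (Pm D * Kp * Pm D)) Kp := by
  simp only [fip_eq_sum, bhad, Matrix.of_apply, Pm, Matrix.mul_diagonal, Matrix.diagonal_mul]
  apply Finset.sum_congr rfl; intro t _
  apply Finset.sum_congr rfl; intro s _
  by_cases h1 : s ∈ D <;> by_cases h2 : t ∈ D <;> simp [h1, h2]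

/-! #### Combinatorial lemmas about the partition -/

lemma sum_ind_one {C : Fin ℓ → Finset (Fin p)} (hpart : IsPartition C) (s : Fin p) :
    ∑ i, (if s ∈ C i then (1:ℝ) else 0) = 1 := by
  obtain ⟨a, ha⟩ := hpart.2.2 s
  rw [Finset.sum_eq_single a]
  · simp [ha]
  · intro b _ hb
    rw [if_neg]
    exact fun hsb => (Finset.disjoint_left.mp (hpart.2.1 b a hb)) hsb ha
  · simp

lemma sigma_cases {C : Fin ℓ → Finset (Fin p)} (hpart : IsPartition C) (s t : Fin p) :
    (∑ i, (if s ∈ C i then (1:ℝ) else 0) * (if t ∈ C i then (1:ℝ) else 0)) = 0 ∨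
    (∑ i, (if s ∈ C i then (1:ℝ) else 0) * (if t ∈ C i then (1:ℝ) else 0)) = 1 := by
  obtain ⟨a, ha⟩ := hpart.2.2 s
  have : (∑ i, (if s ∈ C i then (1:ℝ) else 0) * (if t ∈ C i then (1:ℝ) else 0))
      = if t ∈ C a then 1 else 0 := by
    rw [Finset.sum_eq_single a]
    · simp [ha]
    · intro b _ hb
      rw [if_neg, zero_mul]
      exact fun hsb => (Finset.disjoint_left.mp (hpart.2.1 b a hb)) hsb ha
    · simp
  rw [this]
  split_ifs <;> simp

lemma union_ind {C : Fin ℓ → Finset (Fin p)} (hpart : IsPartition C) {i j : Fin ℓ}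
    (hij : i ≠ j) (s : Fin p) :
    (if s ∈ C i ∪ C j then (1:ℝ) else 0)
      = (if s ∈ C i then (1:ℝ) else 0) + (if s ∈ C j then (1:ℝ) else 0) := by
  by_cases h1 : s ∈ C i <;> by_cases h2 : s ∈ C j <;>
    simp [Finset.mem_union, h1, h2]
  exact absurd h2 (Finset.disjoint_left.mp (hpart.2.1 i j hij) h1)

lemma sum_offDiag_eq (h : Fin ℓ × Fin ℓ → ℝ) :
    ∑ q ∈ Finset.univ.offDiag, h q = (∑ i, ∑ j, h (i, j)) - ∑ i, h (i, i) := by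
  rw [show (Finset.univ : Finset (Fin ℓ)).offDiag
      = (Finset.univ ×ˢ Finset.univ).filter (fun a : Fin ℓ × Fin ℓ => a.1 ≠ a.2) by
      ext; simp, Finset.sum_filter, Finset.sum_product]
  have : ∀ i : Fin ℓ, (∑ j, if i ≠ j then h (i, j) else 0)
      = (∑ j, h (i, j)) - h (i, i) := by
    intro i
    have : ∀ j : Fin ℓ, (if i ≠ j then h (i, j) else 0)
        = h (i, j) - (if i = j then h (i, j) else 0) := by
      intro j; split_ifs with h1 h2 <;> simp_all
    simp_rw [this, Finset.sum_sub_distrib, Finset.sum_ite_eq]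
    simp
  simp_rw [this, Finset.sum_sub_distrib]

lemma offDiag_lin (f : Fin ℓ → ℝ) :
    ∑ q ∈ Finset.univ.offDiag, (f q.1 + f q.2)
      = (2 * (ℓ : ℝ) - 2) * ∑ i, f i := by
  rw [sum_offDiag_eq (fun q => f q.1 + f q.2)]
  simp only [Finset.sum_add_distrib, Finset.sum_const, Finset.card_univ, Fintype.card_fin,
    nsmul_eq_mul, ← Finset.mul_sum]
  ring

lemma offDiag_quad (f g : Fin ℓ → ℝ) :
    ∑ q ∈ Finset.univ.offDiag, (f q.1 + f q.2) * (g q.1 + g q.2)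
      = 2 * ((∑ i, f i) * (∑ i, g i)) + (2 * (ℓ : ℝ) - 4) * ∑ i, f i * g i := by
  rw [sum_offDiag_eq (fun q => (f q.1 + f q.2) * (g q.1 + g q.2))]
  have h1 : ∀ i : Fin ℓ, ∑ j, (f i + f j) * (g i + g j)
      = (ℓ : ℝ) * (f i * g i) + f i * (∑ j, g j) + (∑ j, f j) * g i + ∑ j, f j * g j := by
    intro i
    simp only [add_mul, mul_add, Finset.sum_add_distrib, Finset.sum_const, Finset.card_univ,
      Fintype.card_fin, nsmul_eq_mul, ← Finset.mul_sum, ← Finset.sum_mul]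
    ring
  simp_rw [h1]
  have h2 : ∀ x : Fin ℓ, (f x + f x) * (g x + g x) = 4 * (f x * g x) := by intro x; ring
  simp_rw [h2]
  simp only [Finset.sum_add_distrib, Finset.sum_const, Finset.card_univ, Fintype.card_fin,
    nsmul_eq_mul, ← Finset.mul_sum, ← Finset.sum_mul]
  ring

/-- Master lemma A : the projectors onto the pair blocks average to the identity. -/
lemma sum_Pm {C : Fin ℓ → Finset (Fin p)} (hpart : IsPartition C) :
    ∑ q ∈ Finset.univ.offDiag, Pm (C q.1 ∪ C q.2)
      = (2 * (ℓ : ℝ) - 2) • (1 : Matrix (Fin p) (Fin p) ℝ) := by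
  ext s t
  rw [Matrix.sum_apply]
  by_cases hst : s = t
  · subst hst
    have key : ∀ q ∈ Finset.univ.offDiag (α := Fin ℓ),
        Pm (C q.1 ∪ C q.2) s s
          = (if s ∈ C q.1 then (1:ℝ) else 0) + (if s ∈ C q.2 then (1:ℝ) else 0) := by
      intro q hq
      rw [Pm, Matrix.diagonal_apply_eq, union_ind hpart (Finset.mem_offDiag.mp hq).2.2 s]
    rw [Finset.sum_congr rfl key,
      offDiag_lin (fun i => if s ∈ C i then (1:ℝ) else 0), sum_ind_one hpart s]
    simp [Matrix.one_apply]
  · simp [Pm, Matrix.diagonal_apply_ne _ hst, Matrix.one_apply, hst]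

/-- Master lemma B. -/
lemma sum_bhad {C : Fin ℓ → Finset (Fin p)} (hl : 2 ≤ ℓ) (hpart : IsPartition C)
    (N : Matrix (Fin p) (Fin p) ℝ) :
    ∑ q ∈ Finset.univ.offDiag,
        bhad C (Qmat ℓ) (Pm (C q.1 ∪ C q.2) * N * Pm (C q.1 ∪ C q.2))
      = (2 : ℝ) • N := by
  have hl1 : (ℓ : ℝ) - 1 ≠ 0 := by
    have : (2 : ℝ) ≤ (ℓ : ℝ) := by exact_mod_cast hl
    linarith
  ext s t
  rw [Matrix.sum_apply]
  have entry : ∀ q ∈ Finset.univ.offDiag (α := Fin ℓ),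
      bhad C (Qmat ℓ) (Pm (C q.1 ∪ C q.2) * N * Pm (C q.1 ∪ C q.2)) s t
        = ((∑ i, ∑ j, if s ∈ C i ∧ t ∈ C j then Qmat ℓ i j else 0) * N s t)
            * (((if s ∈ C q.1 then (1:ℝ) else 0) + (if s ∈ C q.2 then (1:ℝ) else 0))
              * ((if t ∈ C q.1 then (1:ℝ) else 0) + (if t ∈ C q.2 then (1:ℝ) else 0))) := by
    intro q hq
    have hq' := (Finset.mem_offDiag.mp hq).2.2
    simp only [bhad, Matrix.of_apply, Pm]
    rw [Matrix.mul_diagonal, Matrix.diagonal_mul, union_ind hpart hq' s,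
      union_ind hpart hq' t]
    ring
  rw [Finset.sum_congr rfl entry, ← Finset.mul_sum,
    offDiag_quad (fun i => if s ∈ C i then (1:ℝ) else 0)
      (fun i => if t ∈ C i then (1:ℝ) else 0),
    sum_ind_one hpart s, sum_ind_one hpart t]
  have hW : (∑ i, ∑ j, if s ∈ C i ∧ t ∈ C j then Qmat ℓ i j else 0)
      = 1 - ((ℓ : ℝ) - 2) / ((ℓ : ℝ) - 1)
          * ∑ i, (if s ∈ C i then (1:ℝ) else 0) * (if t ∈ C i then (1:ℝ) else 0) := by
    have h1 : ∀ i j : Fin ℓ, (if s ∈ C i ∧ t ∈ C j then Qmat ℓ i j else 0)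
        = (if s ∈ C i then (1:ℝ) else 0) * (if t ∈ C j then (1:ℝ) else 0)
          - ((ℓ : ℝ) - 2) / ((ℓ : ℝ) - 1)
            * (if i = j then (if s ∈ C i then (1:ℝ) else 0) * (if t ∈ C j then (1:ℝ) else 0)
               else 0) := by
      intro i j
      rcases eq_or_ne i j with rfl | h3
      · by_cases h1 : s ∈ C i <;> by_cases h2 : t ∈ C i <;>
          simp [Qmat, h1, h2]
      · by_cases h1 : s ∈ C i <;> by_cases h2 : t ∈ C j <;>
          simp [Qmat, h1, h2, h3]
    simp_rw [h1, Finset.sum_sub_distrib, ← Finset.mul_sum, Finset.sum_ite_eq]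
    simp only [Finset.mem_univ, if_true]
    rw [← Finset.sum_mul, sum_ind_one hpart s, sum_ind_one hpart t, one_mul]
  rw [hW, Matrix.smul_apply, smul_eq_mul]
  rcases sigma_cases hpart s t with h | h <;> rw [h] <;> field_simp <;> ring

/-! #### Structural matrix lemmas -/

lemma ptan_eq (X v : Mat n p) :
    ptan X v = X * skewPart (Xᵀ * v) + (1 - X * Xᵀ) * v := by
  simp only [ptan, symPart, skewPart, Matrix.mul_smul, smul_sub, smul_add, Matrix.mul_sub,
    Matrix.mul_add, Matrix.sub_mul, Matrix.one_mul, ← Matrix.mul_assoc]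
  module

lemma Gt_eq (X v : Mat n p) (D : Finset (Fin p)) :
    pblk X D (v * sel D) * (sel D)ᵀ
      = X * (Pm D * skewPart (Xᵀ * v) * Pm D) + ((1 - X * Xᵀ) * v) * Pm D := by
  simp only [pblk, skewPart, Matrix.transpose_mul, Matrix.transpose_transpose,
    Matrix.add_mul, Matrix.sub_mul, Matrix.mul_sub, Matrix.smul_mul, Matrix.mul_smul,
    smul_sub, Matrix.one_mul, Matrix.mul_one, Matrix.mul_assoc, sel_mul_selT,
    sel_mul_selT_assoc]

lemma Bop_eq {C : Fin ℓ → Finset (Fin p)} (X v : Mat n p) (hX : Xᵀ * X = 1)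
    (D : Finset (Fin p)) (Kp : Matrix (Fin p) (Fin p) ℝ) :
    Bop C X (X * (Pm D * Kp * Pm D) + ((1 - X * Xᵀ) * v) * Pm D)
      = X * (choose2 ℓ • bhad C (Qmat ℓ) (Pm D * Kp * Pm D))
        + ((ℓ : ℝ) / 2) • (((1 - X * Xᵀ) * v) * Pm D) := by
  have hXP : Xᵀ * (1 - X * Xᵀ) = 0 := by
    rw [Matrix.mul_sub, Matrix.mul_one, ← Matrix.mul_assoc, hX, Matrix.one_mul, sub_self]
  have hPX : (1 - X * Xᵀ) * X = 0 := by
    rw [Matrix.sub_mul, Matrix.one_mul, Matrix.mul_assoc, hX, Matrix.mul_one, sub_self]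
  have hidem : (1 - X * Xᵀ) * (1 - X * Xᵀ) = 1 - X * Xᵀ := by
    rw [Matrix.sub_mul, Matrix.one_mul, Matrix.mul_sub, Matrix.mul_one,
      show X * Xᵀ * (X * Xᵀ) = X * Xᵀ by
        rw [Matrix.mul_assoc, ← Matrix.mul_assoc Xᵀ, hX, Matrix.one_mul],
      sub_self, sub_zero]
  have h1 : Xᵀ * (X * (Pm D * Kp * Pm D) + ((1 - X * Xᵀ) * v) * Pm D)
      = Pm D * Kp * Pm D := by
    rw [Matrix.mul_add, ← Matrix.mul_assoc, hX, Matrix.one_mul, ← Matrix.mul_assoc,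
      ← Matrix.mul_assoc, hXP, Matrix.zero_mul, Matrix.zero_mul, add_zero]
  have h2 : (1 - X * Xᵀ) * (X * (Pm D * Kp * Pm D) + ((1 - X * Xᵀ) * v) * Pm D)
      = ((1 - X * Xᵀ) * v) * Pm D := by
    rw [Matrix.mul_add, ← Matrix.mul_assoc, hPX, Matrix.zero_mul, zero_add,
      ← Matrix.mul_assoc, ← Matrix.mul_assoc, hidem]
  rw [Bop, h1, h2]


/-- Lemma 4.2: average of the lifted partial Riemannian
subgradients in the `A_X⁻¹`-inner product equals the full Riemannian
subgradient. The average over unordered pairs is written as an average over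
ordered pairs of distinct indices, which is equal to it. -/
theorem average_of_partial_riemannian_subgradients
    (n p ℓ : ℕ) (hp : 1 ≤ p) (hpn : p ≤ n) (hl : 2 ≤ ℓ)
    (C : Fin ℓ → Finset (Fin p)) (hpart : IsPartition C)
    (X : Mat n p) (hX : X ∈ Stiefel n p) (v η : Mat n p) :
    ((ℓ : ℝ) * ((ℓ : ℝ) - 1))⁻¹ *
        ∑ q ∈ Finset.univ.offDiag,
          fip (Bop C X (pblk X (C q.1 ∪ C q.2) (v * sel (C q.1 ∪ C q.2))
                  * (sel (C q.1 ∪ C q.2))ᵀ)) η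
      = fip (ptan X v) η ∧
    ((ℓ : ℝ) * ((ℓ : ℝ) - 1))⁻¹ *
        ∑ q ∈ Finset.univ.offDiag,
          fip (Bop C X (pblk X (C q.1 ∪ C q.2) (v * sel (C q.1 ∪ C q.2))
                  * (sel (C q.1 ∪ C q.2))ᵀ))
            (pblk X (C q.1 ∪ C q.2) (v * sel (C q.1 ∪ C q.2)) * (sel (C q.1 ∪ C q.2))ᵀ)
      = (fnorm (ptan X v)) ^ 2 := by
  have hX' : Xᵀ * X = 1 := hX
  have hl1 : (ℓ : ℝ) - 1 ≠ 0 := by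
    have : (2 : ℝ) ≤ (ℓ : ℝ) := by exact_mod_cast hl
    linarith
  have hl0 : (ℓ : ℝ) ≠ 0 := by
    have : (2 : ℝ) ≤ (ℓ : ℝ) := by exact_mod_cast hl
    linarith
  have hXP : Xᵀ * (1 - X * Xᵀ) = 0 := by
    rw [Matrix.mul_sub, Matrix.mul_one, ← Matrix.mul_assoc, hX', Matrix.one_mul, sub_self]
  have hXW : Xᵀ * ((1 - X * Xᵀ) * v) = 0 := by
    rw [← Matrix.mul_assoc, hXP, Matrix.zero_mul]
  have hXX : ∀ M : Matrix (Fin p) (Fin p) ℝ, Xᵀ * (X * M) = M := by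
    intro M; rw [← Matrix.mul_assoc, hX', Matrix.one_mul]
  have hXWP : ∀ D : Finset (Fin p), Xᵀ * (((1 - X * Xᵀ) * v) * Pm D) = 0 := by
    intro D; rw [← Matrix.mul_assoc, ← Matrix.mul_assoc, hXP, Matrix.zero_mul,
      Matrix.zero_mul]
  constructor
  · -- part (i)
    have key1 : ∀ q ∈ Finset.univ.offDiag (α := Fin ℓ),
        fip (Bop C X (pblk X (C q.1 ∪ C q.2) (v * sel (C q.1 ∪ C q.2))
            * (sel (C q.1 ∪ C q.2))ᵀ)) η
          = choose2 ℓ * fip (bhad C (Qmat ℓ) (Pm (C q.1 ∪ C q.2) * skewPart (Xᵀ * v)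
              * Pm (C q.1 ∪ C q.2))) (Xᵀ * η)
            + ((ℓ : ℝ) / 2) * fip (Pm (C q.1 ∪ C q.2)) (((1 - X * Xᵀ) * v)ᵀ * η) := by
      intro q _
      rw [Gt_eq, Bop_eq X v hX', fip_add_left, fip_mul, fip_smul_left, fip_smul_left,
        fip_mul]
    rw [Finset.sum_congr rfl key1, Finset.sum_add_distrib, ← Finset.mul_sum,
      ← Finset.mul_sum,
      ← fip_sum_left Finset.univ.offDiag
        (fun q => bhad C (Qmat ℓ) (Pm (C q.1 ∪ C q.2) * skewPart (Xᵀ * v)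
          * Pm (C q.1 ∪ C q.2))) (Xᵀ * η),
      ← fip_sum_left Finset.univ.offDiag (fun q => Pm (C q.1 ∪ C q.2))
        (((1 - X * Xᵀ) * v)ᵀ * η),
      sum_bhad hl hpart (skewPart (Xᵀ * v)), sum_Pm hpart, fip_smul_left, fip_smul_left,
      fip_one_mulT, ptan_eq X v, fip_add_left, fip_mul]
    unfold choose2
    field_simp
  · -- part (ii)
    have key2 : ∀ q ∈ Finset.univ.offDiag (α := Fin ℓ),
        fip (Bop C X (pblk X (C q.1 ∪ C q.2) (v * sel (C q.1 ∪ C q.2))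
            * (sel (C q.1 ∪ C q.2))ᵀ))
          (pblk X (C q.1 ∪ C q.2) (v * sel (C q.1 ∪ C q.2)) * (sel (C q.1 ∪ C q.2))ᵀ)
          = choose2 ℓ * fip (bhad C (Qmat ℓ) (Pm (C q.1 ∪ C q.2) * skewPart (Xᵀ * v)
              * Pm (C q.1 ∪ C q.2))) (skewPart (Xᵀ * v))
            + ((ℓ : ℝ) / 2) * fip ((1 - X * Xᵀ) * v)
                (((1 - X * Xᵀ) * v) * Pm (C q.1 ∪ C q.2)) := by
      intro q _
      rw [Gt_eq, Bop_eq X v hX', fip_add_left, fip_add_right, fip_add_right,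
        show fip (X * (choose2 ℓ • bhad C (Qmat ℓ) (Pm (C q.1 ∪ C q.2) * skewPart (Xᵀ * v)
              * Pm (C q.1 ∪ C q.2))))
            (X * (Pm (C q.1 ∪ C q.2) * skewPart (Xᵀ * v) * Pm (C q.1 ∪ C q.2)))
          = choose2 ℓ * fip (bhad C (Qmat ℓ) (Pm (C q.1 ∪ C q.2) * skewPart (Xᵀ * v)
              * Pm (C q.1 ∪ C q.2))) (skewPart (Xᵀ * v)) from by
          rw [fip_mul, hXX, fip_smul_left, fip_bhad],
        show fip (X * (choose2 ℓ • bhad C (Qmat ℓ) (Pm (C q.1 ∪ C q.2) * skewPart (Xᵀ * v)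
              * Pm (C q.1 ∪ C q.2))))
            (((1 - X * Xᵀ) * v) * Pm (C q.1 ∪ C q.2)) = 0 from by
          rw [fip_mul, hXWP, fip_zero_right],
        show fip (((ℓ : ℝ) / 2) • (((1 - X * Xᵀ) * v) * Pm (C q.1 ∪ C q.2)))
            (X * (Pm (C q.1 ∪ C q.2) * skewPart (Xᵀ * v) * Pm (C q.1 ∪ C q.2))) = 0 from by
          rw [fip_smul_left, fip_comm, fip_mul, hXWP, fip_zero_right, mul_zero],
        show fip (((ℓ : ℝ) / 2) • (((1 - X * Xᵀ) * v) * Pm (C q.1 ∪ C q.2)))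
            (((1 - X * Xᵀ) * v) * Pm (C q.1 ∪ C q.2))
          = ((ℓ : ℝ) / 2) * fip ((1 - X * Xᵀ) * v)
              (((1 - X * Xᵀ) * v) * Pm (C q.1 ∪ C q.2)) from by
          rw [fip_smul_left, fip_WP]]
      ring
    rw [Finset.sum_congr rfl key2, Finset.sum_add_distrib, ← Finset.mul_sum,
      ← Finset.mul_sum,
      ← fip_sum_left Finset.univ.offDiag
        (fun q => bhad C (Qmat ℓ) (Pm (C q.1 ∪ C q.2) * skewPart (Xᵀ * v)
          * Pm (C q.1 ∪ C q.2))) (skewPart (Xᵀ * v)),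
      sum_bhad hl hpart (skewPart (Xᵀ * v)), fip_smul_left,
      show (∑ q ∈ Finset.univ.offDiag (α := Fin ℓ), fip ((1 - X * Xᵀ) * v)
          (((1 - X * Xᵀ) * v) * Pm (C q.1 ∪ C q.2)))
        = (2 * (ℓ : ℝ) - 2) * fip ((1 - X * Xᵀ) * v) ((1 - X * Xᵀ) * v) from by
        rw [Finset.sum_congr rfl (fun q _ => fip_comm ((1 - X * Xᵀ) * v)
            (((1 - X * Xᵀ) * v) * Pm (C q.1 ∪ C q.2))),
          ← fip_sum_left Finset.univ.offDiag
            (fun q => ((1 - X * Xᵀ) * v) * Pm (C q.1 ∪ C q.2)) ((1 - X * Xᵀ) * v),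
          ← Matrix.mul_sum, sum_Pm hpart, Matrix.mul_smul, Matrix.mul_one,
          fip_smul_left]]
    rw [show (fnorm (ptan X v)) ^ 2 = fip (ptan X v) (ptan X v) from
        Real.sq_sqrt (fip_self_nonneg _),
      ptan_eq X v, fip_add_left, fip_add_right, fip_add_right, fip_mul, hXX,
      show fip (X * skewPart (Xᵀ * v)) ((1 - X * Xᵀ) * v) = 0 by
        rw [fip_mul, hXW, fip_zero_right],
      show fip ((1 - X * Xᵀ) * v) (X * skewPart (Xᵀ * v)) = 0 by
        rw [fip_comm, fip_mul, hXW, fip_zero_right]]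
    unfold choose2
    field_simp
    ring


end RSSM
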